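/- For any X ∈ B(H) and ν ∈ [0,1], w²(X + (1−2ν)X*) ≤ (1−2ν)² w²(X) + |1−2ν| w(X²) + ((|1−2ν|+1)/2)·‖|X|² + |X*|²‖. -/

import Mathlib

open scoped InnerProductSpace

/-- Numerical radius of a bounded operator on a complex Hilbert space. -/
noncomputable def numRad {H : Type*} [NormedAddCommGroup H] [InnerProductSpace ℂ H]
    (T : H →L[ℂ] H) : ℝ :=
  ⨆ z : {z : H // ‖z‖ = 1}, ‖(⟪T z.1, z.1⟫_ℂ : ℂ)‖

/-- Crawford number. -/
noncomputable def crawford {H : Type*} [NormedAddCommGroup H] [InnerProductSpace ℂ H]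
    (T : H →L[ℂ] H) : ℝ :=
  ⨅ z : {z : H // ‖z‖ = 1}, ‖(⟪T z.1, z.1⟫_ℂ : ℂ)‖

/-- The 2×2 block operator matrix `[[A, B], [C, D]]` acting on `H ⊕ H`
(the ℓ² direct sum `WithLp 2 (H × H)`), sending `(x, y)` to `(Ax + By, Cx + Dy)`. -/
noncomputable def blk {H : Type*} [NormedAddCommGroup H] [InnerProductSpace ℂ H]
    (A B C D : H →L[ℂ] H) : WithLp 2 (H × H) →L[ℂ] WithLp 2 (H × H) :=
  (((WithLp.prodContinuousLinearEquiv 2 ℂ H H).symm.toContinuousLinearMap).comp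
    (((A.comp (ContinuousLinearMap.fst ℂ H H) + B.comp (ContinuousLinearMap.snd ℂ H H)).prod
      (C.comp (ContinuousLinearMap.fst ℂ H H) + D.comp (ContinuousLinearMap.snd ℂ H H))))).comp
    ((WithLp.prodContinuousLinearEquiv 2 ℂ H H).toContinuousLinearMap)


/-!
At a unit vector `z`, put `c = ⟪X z, z⟫`. Then `⟪(X + a X*) z, z⟫ = c + a c̄`, whose squared
modulus is `(1 + a)² (Re c)² + (1 - a)² (Im c)²`. Cauchy–Schwarz applied to `(X ± X*) z` gives
`4 (Re c)² ≤ ‖X z‖² + ‖X* z‖² + 2 Re ⟪X² z, z⟫` and `4 (Im c)² ≤ ‖X z‖² + ‖X* z‖² - 2 Re ⟪X² z, z⟫`;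
the first absorbs the cross term `2a ((Re c)² - (Im c)²)` when `a ≥ 0`, the second when `a ≤ 0`.
Finally `‖X z‖² + ‖X* z‖² = ⟪(|X|² + |X*|²) z, z⟫ ≤ ‖|X|² + |X*|²‖`, and one takes the supremum
over `z`.
-/

open ComplexConjugate

lemma Complex.norm_add_mul_conj_sq_le {c d : ℂ} {s : ℝ} (a : ℝ)
    (hre : 4 * c.re ^ 2 ≤ s + 2 * d.re) (him : 4 * c.im ^ 2 ≤ s - 2 * d.re) :
    ‖c + a * conj c‖ ^ 2 ≤ a ^ 2 * ‖c‖ ^ 2 + |a| * ‖d‖ + (|a| + 1) / 2 * s := by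
  have hd := abs_le.1 (Complex.abs_re_le_norm d)
  rw [Complex.sq_norm, Complex.sq_norm, Complex.normSq_apply, Complex.normSq_apply]
  simp only [Complex.add_re, Complex.add_im, Complex.mul_re, Complex.mul_im, Complex.conj_re,
    Complex.conj_im, Complex.ofReal_re, Complex.ofReal_im]
  rcases abs_cases a with ⟨ha, ha0⟩ | ⟨ha, ha0⟩ <;> rw [ha]
  · nlinarith [mul_le_mul_of_nonneg_left hre ha0, mul_nonneg ha0 (sq_nonneg c.im)]
  · have ha0' : 0 ≤ -a := by linarith
    nlinarith [mul_le_mul_of_nonneg_left him ha0', mul_nonneg ha0' (sq_nonneg c.re)]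

section InnerProductSpace

variable {𝕜 E : Type*} [RCLike 𝕜] [NormedAddCommGroup E] [InnerProductSpace 𝕜 E]

lemma sq_norm_inner_le_sq_norm_of_norm_eq_one (w : E) {z : E} (hz : ‖z‖ = 1) :
    ‖⟪w, z⟫_𝕜‖ ^ 2 ≤ ‖w‖ ^ 2 := by
  gcongr
  simpa [hz] using norm_inner_le_norm (𝕜 := 𝕜) w z

lemma ContinuousLinearMap.norm_inner_apply_self_le (T : E →L[𝕜] E) {z : E} (hz : ‖z‖ = 1) :
    ‖⟪T z, z⟫_𝕜‖ ≤ ‖T‖ :=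
  calc ‖⟪T z, z⟫_𝕜‖ ≤ ‖T z‖ * ‖z‖ := norm_inner_le_norm _ _
    _ ≤ ‖T‖ * ‖z‖ * ‖z‖ := by gcongr; exact T.le_opNorm z
    _ = ‖T‖ := by simp [hz]

end InnerProductSpace

section NumRad

variable {H : Type*} [NormedAddCommGroup H] [InnerProductSpace ℂ H]

lemma numRad_nonneg (T : H →L[ℂ] H) : 0 ≤ numRad T :=
  Real.iSup_nonneg fun _ => norm_nonneg _

lemma norm_inner_apply_self_le_numRad (T : H →L[ℂ] H) {z : H} (hz : ‖z‖ = 1) :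
    ‖⟪T z, z⟫_ℂ‖ ≤ numRad T :=
  le_ciSup (f := fun z : {z : H // ‖z‖ = 1} => ‖⟪T z.1, z.1⟫_ℂ‖)
    ⟨‖T‖, by rintro _ ⟨z, rfl⟩; exact T.norm_inner_apply_self_le z.2⟩ ⟨z, hz⟩

lemma numRad_sq_le {T : H →L[ℂ] H} {M : ℝ} (hM : 0 ≤ M)
    (h : ∀ z : H, ‖z‖ = 1 → ‖⟪T z, z⟫_ℂ‖ ^ 2 ≤ M) : numRad T ^ 2 ≤ M := by
  rw [← Real.le_sqrt (numRad_nonneg T) hM]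
  exact Real.iSup_le (fun z => (Real.le_sqrt (norm_nonneg _) hM).2 (h z.1 z.2))
    (Real.sqrt_nonneg M)

variable [CompleteSpace H]

lemma inner_star_mul_self_add_self_mul_star_apply (X : H →L[ℂ] H) (z : H) :
    ⟪(star X * X + X * star X) z, z⟫_ℂ = ((‖X z‖ ^ 2 + ‖X.adjoint z‖ ^ 2 : ℝ) : ℂ) := by
  rw [add_apply, mul_apply_eq_comp, mul_apply_eq_comp, inner_add_left,
    ContinuousLinearMap.star_eq_adjoint, X.adjoint_inner_left,
    ← X.adjoint_inner_right (X.adjoint z) z, inner_self_eq_norm_sq_to_K,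
    inner_self_eq_norm_sq_to_K]
  push_cast
  rfl

lemma sq_norm_apply_add_sq_norm_adjoint_apply_le (X : H →L[ℂ] H) {z : H} (hz : ‖z‖ = 1) :
    ‖X z‖ ^ 2 + ‖X.adjoint z‖ ^ 2 ≤ ‖star X * X + X * star X‖ := by
  have h := (star X * X + X * star X).norm_inner_apply_self_le hz
  rwa [inner_star_mul_self_add_self_mul_star_apply, Complex.norm_real, Real.norm_eq_abs,
    abs_of_nonneg (by positivity)] at h

lemma sq_norm_inner_add_smul_adjoint_apply_le (a : ℝ) (X : H →L[ℂ] H) {z : H} (hz : ‖z‖ = 1) :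
    ‖⟪(X + (a : ℂ) • X.adjoint) z, z⟫_ℂ‖ ^ 2 ≤
      a ^ 2 * ‖⟪X z, z⟫_ℂ‖ ^ 2 + |a| * ‖⟪(X * X) z, z⟫_ℂ‖ +
        (|a| + 1) / 2 * (‖X z‖ ^ 2 + ‖X.adjoint z‖ ^ 2) := by
  have hadj : ⟪X.adjoint z, z⟫_ℂ = conj ⟪X z, z⟫_ℂ := by
    rw [X.adjoint_inner_left, inner_conj_symm]
  have hsq : ⟪X z, X.adjoint z⟫_ℂ = ⟪(X * X) z, z⟫_ℂ := by
    rw [X.adjoint_inner_right, mul_apply_eq_comp]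
  have hre := sq_norm_inner_le_sq_norm_of_norm_eq_one (𝕜 := ℂ) (X z + X.adjoint z) hz
  rw [inner_add_left, hadj, Complex.add_conj, Complex.norm_real, Real.norm_eq_abs, sq_abs,
    norm_add_sq (𝕜 := ℂ), hsq, RCLike.re_to_complex] at hre
  have him := sq_norm_inner_le_sq_norm_of_norm_eq_one (𝕜 := ℂ) (X z - X.adjoint z) hz
  rw [inner_sub_left, hadj, Complex.sub_conj, norm_mul, Complex.norm_I, mul_one,
    Complex.norm_real, Real.norm_eq_abs, sq_abs, norm_sub_sq (𝕜 := ℂ), hsq,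
    RCLike.re_to_complex] at him
  rw [add_apply, smul_apply, inner_add_left, inner_smul_left, hadj, Complex.conj_ofReal]
  exact Complex.norm_add_mul_conj_sq_le a (by linarith) (by linarith)

end NumRad

theorem numRad_sq_skew_le_general {H : Type*} [NormedAddCommGroup H] [InnerProductSpace ℂ H]
    [CompleteSpace H] {ν : ℝ} (X : H →L[ℂ] H) :
    numRad (X + ((1 - 2*ν : ℝ) : ℂ) • X.adjoint) ^ 2 ≤
      (1 - 2*ν) ^ 2 * numRad X ^ 2 + |1 - 2*ν| * numRad (X * X) +
        ((|1 - 2*ν| + 1) / 2) * ‖star X * X + X * star X‖ := by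
  have hX := numRad_nonneg X
  have hXX := numRad_nonneg (X * X)
  refine numRad_sq_le (by positivity) fun z hz => ?_
  refine (sq_norm_inner_add_smul_adjoint_apply_le _ X hz).trans ?_
  gcongr
  · exact norm_inner_apply_self_le_numRad X hz
  · exact norm_inner_apply_self_le_numRad (X * X) hz
  · exact sq_norm_apply_add_sq_norm_adjoint_apply_le X hz

theorem numRad_sq_skew_le {H : Type*} [NormedAddCommGroup H] [InnerProductSpace ℂ H]
    [CompleteSpace H] {ν : ℝ} (hν : ν ∈ Set.Icc (0 : ℝ) 1) (X : H →L[ℂ] H) :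
    numRad (X + ((1 - 2*ν : ℝ) : ℂ) • X.adjoint) ^ 2 ≤
      (1 - 2*ν) ^ 2 * numRad X ^ 2 + |1 - 2*ν| * numRad (X * X) +
        ((|1 - 2*ν| + 1) / 2) * ‖star X * X + X * star X‖ :=
  numRad_sq_skew_le_general X
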